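/- Let X be a random variable taking values in a finite set 𝒳 with distribution P_X and Rényi entropy of second order R(X) = −log₂ Σ_{x∈𝒳} P_X(x)². Let 𝒢 be a universal class of hash functions 𝒳 → {0,1}^r, let G be uniformly distributed on 𝒢 and independent of X, and set Q = G(X). Then H(Q|G) ≥ r − log₂(1 + 2^{r − R(X)}) ≥ r − 2^{r − R(X)} / ln 2, where H(Q|G) is the conditional Shannon entropy with base-2 logarithm. -/

import Mathlib

/-!
For a fixed hash function `g`, the Shannon entropy of `g(X)` is at least its collision entropy
`-log₂ Σ_q P[g(X) = q]²` (Jensen for `log`). Averaging over `g` and applying Jensen once more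
bounds `H(Q|G)` below by `-log₂` of the average collision probability of `G(X)`, and universality
bounds that average by `Σ_x P(x)² + 2^{-r}`: two independent copies of `X` collide under `G` only
if they are equal or if distinct values are hashed together. Finally
`-log₂(2^{-R(X)} + 2^{-r}) = r - log₂(1 + 2^{r - R(X)})`, and `log(1 + y) ≤ y` gives the second
inequality.
-/

open scoped BigOperators

/-- A family of hash functions `𝒳 → {0,1}^r` indexed by a finite type `G` is a
universal class: for any `x₁ ≠ x₂`, a uniformly chosen member collides on them with
probability at most `1/2^r`. -/
def IsUniversalClass {X G : Type*} [Fintype G] [DecidableEq X] (r : ℕ)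
    (hash : G → X → Fin r → ZMod 2) : Prop :=
  ∀ x₁ x₂ : X, x₁ ≠ x₂ →
    ((Finset.univ.filter fun g => hash g x₁ = hash g x₂).card : ℝ) / Fintype.card G ≤
      ((2 : ℝ) ^ r)⁻¹

/-- The Rényi entropy of second order `R(X) = -log₂ Σ_x P_X(x)²`. -/
noncomputable def renyi2 {X : Type*} [Fintype X] (P : X → ℝ) : ℝ :=
  -Real.logb 2 (∑ x, P x ^ 2)

/-- The conditional Shannon entropy (base 2) `H(Q|G)` of `Q = G(X)` given the
uniformly chosen hash function `G`, for `X` distributed according to `P` and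
independent of `G`. -/
noncomputable def condEntHash {X G : Type*} [Fintype X] [Fintype G] [DecidableEq X]
    (r : ℕ) (hash : G → X → Fin r → ZMod 2) (P : X → ℝ) : ℝ :=
  ∑ g, (Fintype.card G : ℝ)⁻¹ *
    ∑ q : Fin r → ZMod 2,
      -((∑ x ∈ Finset.univ.filter fun x => hash g x = q, P x) *
        Real.logb 2 (∑ x ∈ Finset.univ.filter fun x => hash g x = q, P x))

open Finset Real

lemma sum_mul_log_le_log_sum_mul {ι : Type*} (s : Finset ι) (w x : ι → ℝ)
    (hw : ∀ i ∈ s, 0 ≤ w i) (hw1 : ∑ i ∈ s, w i = 1) (hx : ∀ i ∈ s, w i ≠ 0 → 0 < x i) :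
    ∑ i ∈ s, w i * log (x i) ≤ log (∑ i ∈ s, w i * x i) := by
  classical
  have hsupp : ∀ f : ι → ℝ, ∑ i ∈ s with w i ≠ 0, w i * f i = ∑ i ∈ s, w i * f i :=
    fun f => sum_filter_of_ne fun i _ h hw0 => h (by rw [hw0, zero_mul])
  rw [← hsupp, ← hsupp]
  simpa only [smul_eq_mul] using strictConcaveOn_log_Ioi.concaveOn.le_map_sum
    (fun i hi => hw i (mem_filter.1 hi).1) (by rw [sum_filter_ne_zero, hw1])
    (fun i hi => hx i (mem_filter.1 hi).1 (mem_filter.1 hi).2)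

lemma neg_logb_sum_mul_le_sum_mul_neg_logb {ι : Type*} (s : Finset ι) (w x : ι → ℝ) {b : ℝ}
    (hb : 1 < b) (hw : ∀ i ∈ s, 0 ≤ w i) (hw1 : ∑ i ∈ s, w i = 1)
    (hx : ∀ i ∈ s, w i ≠ 0 → 0 < x i) :
    -logb b (∑ i ∈ s, w i * x i) ≤ ∑ i ∈ s, w i * -logb b (x i) := by
  simp only [logb, mul_neg, sum_neg_distrib, ← neg_div, mul_div_assoc', ← sum_div]
  exact div_le_div_of_nonneg_right (neg_le_neg (sum_mul_log_le_log_sum_mul s w x hw hw1 hx))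
    (log_pos hb).le

lemma sum_sq_pos_of_sum_eq_one {ι : Type*} {s : Finset ι} {p : ι → ℝ}
    (hp1 : ∑ i ∈ s, p i = 1) : 0 < ∑ i ∈ s, p i ^ 2 := by
  obtain ⟨i, hi, hpi⟩ := exists_ne_zero_of_sum_ne_zero (hp1 ▸ one_ne_zero)
  exact (pow_two_pos_of_ne_zero hpi).trans_le (single_le_sum (fun j _ => sq_nonneg (p j)) hi)

lemma neg_logb_sum_sq_le_sum_neg_mul_logb {ι : Type*} (s : Finset ι) (p : ι → ℝ) {b : ℝ}
    (hb : 1 < b) (hp : ∀ i ∈ s, 0 ≤ p i) (hp1 : ∑ i ∈ s, p i = 1) :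
    -logb b (∑ i ∈ s, p i ^ 2) ≤ ∑ i ∈ s, -(p i * logb b (p i)) := by
  simpa only [sq, mul_neg] using neg_logb_sum_mul_le_sum_mul_neg_logb s p p hb hp hp1
    fun i hi hne => (hp i hi).lt_of_ne' hne

lemma logb_one_add_le_div_log {b y : ℝ} (hb : 1 < b) (hy : -1 < y) :
    logb b (1 + y) ≤ y / log b :=
  div_le_div_of_nonneg_right (by linarith [log_le_sub_one_of_pos (by linarith : 0 < 1 + y)])
    (log_pos hb).le

lemma two_rpow_sub_renyi2 {X : Type*} [Fintype X] {P : X → ℝ} (hS : 0 < ∑ x, P x ^ 2)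
    (r : ℕ) : (2 : ℝ) ^ ((r : ℝ) - renyi2 P) = 2 ^ r * ∑ x, P x ^ 2 := by
  rw [renyi2, sub_neg_eq_add, rpow_add two_pos, rpow_natCast, rpow_logb two_pos one_lt_two.ne' hS]

lemma sub_logb_one_add_two_pow_mul (r : ℕ) {S : ℝ} (hS : 0 ≤ S) :
    (r : ℝ) - logb 2 (1 + 2 ^ r * S) = -logb 2 (S + (2 ^ r)⁻¹) := by
  have hfactor : 1 + 2 ^ r * S = 2 ^ r * (S + ((2 : ℝ) ^ r)⁻¹) := by field_simp; ring
  rw [hfactor, logb_mul (by positivity) (by positivity), logb_pow, logb_self_eq_one one_lt_two]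
  ring

section ImageDist

variable {X Y : Type*} [Fintype X] [DecidableEq Y]

def imageDist (f : X → Y) (P : X → ℝ) (y : Y) : ℝ := ∑ x with f x = y, P x

lemma imageDist_nonneg (f : X → Y) {P : X → ℝ} (hP : ∀ x, 0 ≤ P x) (y : Y) :
    0 ≤ imageDist f P y :=
  sum_nonneg fun x _ => hP x

lemma sum_imageDist [Fintype Y] (f : X → Y) (P : X → ℝ) :
    ∑ y, imageDist f P y = ∑ x, P x :=
  sum_fiberwise _ f P

lemma sum_imageDist_sq [Fintype Y] (f : X → Y) (P : X → ℝ) :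
    ∑ y, imageDist f P y ^ 2 = ∑ x, P x * imageDist f P (f x) := by
  rw [← sum_fiberwise univ f fun x => P x * imageDist f P (f x)]
  refine sum_congr rfl fun y _ => ?_
  rw [sq]
  show (∑ x with f x = y, P x) * imageDist f P y = _
  rw [sum_mul]
  exact sum_congr rfl fun x hx => by rw [(mem_filter.1 hx).2]

end ImageDist

section Collision

variable {X Y G : Type*} [Fintype G] [DecidableEq Y]

noncomputable def collisionProb (f : G → X → Y) (x₁ x₂ : X) : ℝ :=
  (#{g | f g x₁ = f g x₂} : ℝ) / Fintype.card G

lemma collisionProb_le_one (f : G → X → Y) (x₁ x₂ : X) : collisionProb f x₁ x₂ ≤ 1 :=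
  div_le_one_of_le₀ (by exact_mod_cast card_le_univ _) (Nat.cast_nonneg _)

variable [Fintype X]

lemma sum_inv_card_mul_imageDist_apply (f : G → X → Y) (P : X → ℝ) (x₁ : X) :
    ∑ g, (Fintype.card G : ℝ)⁻¹ * imageDist (f g) P (f g x₁) =
      ∑ x₂, P x₂ * collisionProb f x₂ x₁ := by
  simp only [imageDist, sum_filter, mul_sum]
  rw [sum_comm]
  refine sum_congr rfl fun x₂ _ => ?_
  simp only [mul_ite, mul_zero]
  rw [← sum_filter, sum_const, nsmul_eq_mul, collisionProb]
  ring

lemma sum_inv_card_mul_sum_imageDist_sq_le [Fintype Y] (f : G → X → Y) {P : X → ℝ}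
    (hP0 : ∀ x, 0 ≤ P x) (hP1 : ∑ x, P x = 1) {ε : ℝ} (hε : 0 ≤ ε)
    (hf : ∀ x₁ x₂, x₁ ≠ x₂ → collisionProb f x₁ x₂ ≤ ε) :
    ∑ g, (Fintype.card G : ℝ)⁻¹ * ∑ y, imageDist (f g) P y ^ 2 ≤ ∑ x, P x ^ 2 + ε := by
  classical
  have hpair : ∀ x₁ x₂, collisionProb f x₂ x₁ ≤ (if x₂ = x₁ then 1 else 0) + ε := by
    intro x₁ x₂
    split_ifs with h
    · linarith [collisionProb_le_one f x₂ x₁]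
    · simpa using hf x₂ x₁ h
  have hrow : ∀ x₁, ∑ x₂, P x₂ * collisionProb f x₂ x₁ ≤ P x₁ + ε := fun x₁ =>
    calc ∑ x₂, P x₂ * collisionProb f x₂ x₁
        ≤ ∑ x₂, P x₂ * ((if x₂ = x₁ then 1 else 0) + ε) :=
          sum_le_sum fun x₂ _ => mul_le_mul_of_nonneg_left (hpair x₁ x₂) (hP0 x₂)
      _ = P x₁ + ε := by simp [mul_add, sum_add_distrib, ← sum_mul, hP1]
  calc ∑ g, (Fintype.card G : ℝ)⁻¹ * ∑ y, imageDist (f g) P y ^ 2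
      = ∑ x₁, P x₁ * ∑ g, (Fintype.card G : ℝ)⁻¹ * imageDist (f g) P (f g x₁) := by
        simp only [sum_imageDist_sq, mul_sum]
        rw [sum_comm]
        exact sum_congr rfl fun _ _ => sum_congr rfl fun _ _ => by ring
    _ ≤ ∑ x₁, P x₁ * (P x₁ + ε) := by
        refine sum_le_sum fun x₁ _ => mul_le_mul_of_nonneg_left ?_ (hP0 x₁)
        rw [sum_inv_card_mul_imageDist_apply]
        exact hrow x₁
    _ = ∑ x, P x ^ 2 + ε := by
        simp only [mul_add, sum_add_distrib, ← sum_mul, hP1, one_mul, sq]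

end Collision

/-- **Generalized privacy amplification** (Theorem 3 of Bennett–Brassard–Crépeau–
Maurer): if `X` has distribution `P` with second-order Rényi entropy `R(X)`, `G` is a
uniformly chosen member of a universal class of hash functions `𝒳 → {0,1}^r`
independent of `X`, and `Q = G(X)`, then
`H(Q|G) ≥ r - log₂(1 + 2^{r - R(X)}) ≥ r - 2^{r - R(X)} / ln 2`. -/
theorem privacy_amplification {X G : Type*} [Fintype X] [Fintype G] [DecidableEq X]
    [Nonempty G] (P : X → ℝ) (hP0 : ∀ x, 0 ≤ P x) (hP1 : ∑ x, P x = 1)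
    (r : ℕ) (hash : G → X → Fin r → ZMod 2) (huniv : IsUniversalClass r hash) :
    (r : ℝ) - Real.logb 2 (1 + 2 ^ ((r : ℝ) - renyi2 P)) ≤ condEntHash r hash P ∧
    (r : ℝ) - 2 ^ ((r : ℝ) - renyi2 P) / Real.log 2 ≤
      (r : ℝ) - Real.logb 2 (1 + 2 ^ ((r : ℝ) - renyi2 P)) := by
  set w : ℝ := (Fintype.card G : ℝ)⁻¹
  set c : G → ℝ := fun g => ∑ q, imageDist (hash g) P q ^ 2
  have hdist : ∀ g, ∑ q, imageDist (hash g) P q = 1 := fun g => (sum_imageDist _ P).trans hP1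
  have hw1 : ∑ _g : G, w = 1 := by simp [w]
  have hc : ∀ g, 0 < c g := fun g => sum_sq_pos_of_sum_eq_one (hdist g)
  have hcoll : ∑ g, w * c g ≤ ∑ x, P x ^ 2 + (2 ^ r)⁻¹ :=
    sum_inv_card_mul_sum_imageDist_sq_le hash hP0 hP1 (by positivity) huniv
  have hpow : 0 < (2 : ℝ) ^ ((r : ℝ) - renyi2 P) := by positivity
  refine ⟨?_, sub_le_sub_left (logb_one_add_le_div_log one_lt_two (by linarith)) _⟩
  rw [two_rpow_sub_renyi2 (sum_sq_pos_of_sum_eq_one hP1),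
    sub_logb_one_add_two_pow_mul r (sum_nonneg fun x _ => sq_nonneg (P x))]
  calc -logb 2 (∑ x, P x ^ 2 + (2 ^ r)⁻¹)
      ≤ -logb 2 (∑ g, w * c g) := neg_le_neg (logb_le_logb_of_le one_lt_two
        (sum_pos (fun g _ => mul_pos (by positivity) (hc g)) univ_nonempty) hcoll)
    _ ≤ ∑ g, w * -logb 2 (c g) := neg_logb_sum_mul_le_sum_mul_neg_logb _ _ _ one_lt_two
        (fun _ _ => by positivity) hw1 fun g _ _ => hc g
    _ ≤ condEntHash r hash P := sum_le_sum fun g _ => mul_le_mul_of_nonneg_left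
        (neg_logb_sum_sq_le_sum_neg_mul_logb _ _ one_lt_two
          (fun q _ => imageDist_nonneg _ hP0 q) (hdist g)) (by positivity)
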